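/- Let (E, d) be a metric space, let d' be a second pseudo-metric on a subset S ⊆ E with d ≤ d' on S × S, and let f : [0,1] → S be a continuous path. Suppose there exists ε > 0 such that for all r, r' ∈ [0,1] with |r − r'| < ε one has d(f(r), f(r')) = d'(f(r), f(r')). Then the lengths of f with respect to d and d' coincide: length_d(f) = length_{d'}(f). -/

import Mathlib

/-- The length of a path `f : [0,1] → E` with respect to a pseudo-metric `δ`:
the supremum over finite partitions `0 = r₀ < … < r_k = 1` of `Σ δ(f(r_{i-1}), f(r_i))`. -/
noncomputable def pathLength {E : Type*} (δ : E → E → ℝ) (f : ℝ → E) : ℝ :=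
  sSup { L : ℝ | ∃ (k : ℕ) (r : Fin (k + 1) → ℝ), Monotone r ∧
    (∀ i, r i ∈ Set.Icc (0:ℝ) 1) ∧ r 0 = 0 ∧ r (Fin.last k) = 1 ∧
    L = ∑ i : Fin k, δ (f (r i.castSucc)) (f (r i.succ)) }

/-!
Refining a partition can only increase its sum `Σ δ(f(r_{i-1}), f(r_i))`, by the triangle
inequality for `δ`. Cutting every interval of a partition into `M` equal pieces with `1 / M < ε`
therefore shows that the length is already the supremum over partitions of mesh `< ε`, and on
such partitions the sums for `dist` and for `d'` agree term by term.
-/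

open Finset Set

theorem le_sum_range_of_triangle {α : Type*} {T : Set α} {δ : α → α → ℝ}
    (htri : ∀ x ∈ T, ∀ y ∈ T, ∀ z ∈ T, δ x z ≤ δ x y + δ y z)
    {p : ℕ → α} (hp : ∀ j, p j ∈ T) (n : ℕ) :
    δ (p 0) (p (n + 1)) ≤ ∑ j ∈ range (n + 1), δ (p j) (p (j + 1)) := by
  induction n with
  | zero => simp
  | succ n ih =>
    rw [sum_range_succ]
    exact (htri _ (hp 0) _ (hp (n + 1)) _ (hp (n + 2))).trans (by gcongr)

theorem sum_range_mul_eq_sum_sum {β : Type*} [AddCommMonoid β] (h : ℕ → β) (k M : ℕ) :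
    ∑ t ∈ range (k * M), h t = ∑ i ∈ range k, ∑ j ∈ range M, h (M * i + j) := by
  induction k with
  | zero => simp
  | succ k ih => rw [Nat.succ_mul, sum_range_add, ih, sum_range_succ, mul_comm]

/-- The points cutting each interval `[R i, R (i + 1)]` into `M` equal pieces, listed in order. -/
noncomputable def subdivide (R : ℕ → ℝ) (M t : ℕ) : ℝ :=
  R (t / M) + (t % M : ℕ) / M * (R (t / M + 1) - R (t / M))

section Subdivide

variable {R : ℕ → ℝ} {M : ℕ}

theorem subdivide_mul_add (hM : 0 < M) (i : ℕ) {j : ℕ} (hj : j ≤ M) :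
    subdivide R M (M * i + j) = R i + j / M * (R (i + 1) - R i) := by
  rcases hj.lt_or_eq with hj | rfl
  · simp [subdivide, Nat.mul_add_div hM, Nat.div_eq_of_lt hj, Nat.mod_eq_of_lt hj]
  · simp [subdivide, ← Nat.mul_succ, Nat.mul_div_cancel_left _ hM, hM.ne']

theorem subdivide_mul (hM : 0 < M) (i : ℕ) : subdivide R M (M * i) = R i := by
  simpa using subdivide_mul_add (R := R) hM i (Nat.zero_le M)

theorem subdivide_add_one_sub (hM : 0 < M) (t : ℕ) :
    subdivide R M (t + 1) - subdivide R M t = (R (t / M + 1) - R (t / M)) / M := by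
  have hlt := Nat.mod_lt t hM
  conv_lhs => rw [← Nat.div_add_mod t M, add_assoc, subdivide_mul_add hM _ hlt,
    subdivide_mul_add hM _ hlt.le]
  push_cast
  field_simp
  ring

theorem subdivide_mem_Icc (hR : Monotone R) (hM : 0 < M) (t : ℕ) :
    subdivide R M t ∈ Icc (R (t / M)) (R (t / M + 1)) := by
  have hΔ : 0 ≤ R (t / M + 1) - R (t / M) := sub_nonneg.2 (hR (Nat.le_succ _))
  have hθ₀ : 0 ≤ ((t % M : ℕ) : ℝ) / M := by positivity
  have hθ₁ : ((t % M : ℕ) : ℝ) / M ≤ 1 :=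
    div_le_one_of_le₀ (by exact_mod_cast (Nat.mod_lt t hM).le) (by positivity)
  constructor <;> unfold subdivide <;> nlinarith

theorem subdivide_add_one_sub_mem_Icc (hR : Monotone R) (hR01 : ∀ n, R n ∈ Icc (0 : ℝ) 1)
    (hM : 0 < M) (t : ℕ) :
    subdivide R M (t + 1) - subdivide R M t ∈ Icc 0 (1 / (M : ℝ)) := by
  have hΔ₀ : 0 ≤ R (t / M + 1) - R (t / M) := sub_nonneg.2 (hR (Nat.le_succ _))
  have hΔ₁ : R (t / M + 1) - R (t / M) ≤ 1 := by
    linarith [(hR01 (t / M + 1)).2, (hR01 (t / M)).1]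
  rw [subdivide_add_one_sub hM]
  exact ⟨by positivity, div_le_div_of_nonneg_right hΔ₁ (by positivity)⟩

theorem sum_le_sum_subdivide {α : Type*} {T : Set α} {δ : α → α → ℝ}
    (htri : ∀ x ∈ T, ∀ y ∈ T, ∀ z ∈ T, δ x z ≤ δ x y + δ y z)
    {φ : ℝ → α} (hφ : ∀ t, φ (subdivide R M t) ∈ T) (hM : 0 < M) (k : ℕ) :
    ∑ i ∈ range k, δ (φ (R i)) (φ (R (i + 1))) ≤
      ∑ t ∈ range (k * M), δ (φ (subdivide R M t)) (φ (subdivide R M (t + 1))) := by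
  obtain ⟨n, rfl⟩ : ∃ n, M = n + 1 := Nat.exists_eq_succ_of_ne_zero hM.ne'
  rw [sum_range_mul_eq_sum_sum]
  gcongr with i
  have hchain := le_sum_range_of_triangle htri
    (p := fun j => φ (subdivide R (n + 1) ((n + 1) * i + j))) (fun j => hφ _) n
  rwa [add_zero, subdivide_mul hM, ← mul_add_one, subdivide_mul hM] at hchain

end Subdivide

section Partition

variable {E : Type*}

def finePartitionSums (δ : E → E → ℝ) (f : ℝ → E) (ε : ℝ) : Set ℝ :=
  { L | ∃ (k : ℕ) (r : Fin (k + 1) → ℝ), Monotone r ∧ (∀ i, r i ∈ Icc (0 : ℝ) 1) ∧ r 0 = 0 ∧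
    r (Fin.last k) = 1 ∧ (∀ i : Fin k, |r i.castSucc - r i.succ| < ε) ∧
    L = ∑ i : Fin k, δ (f (r i.castSucc)) (f (r i.succ)) }

variable {S : Set E} {δ δ' : E → E → ℝ} {f : ℝ → E} {ε : ℝ}

theorem exists_mem_finePartitionSums_ge
    (htri : ∀ x ∈ S, ∀ y ∈ S, ∀ z ∈ S, δ x z ≤ δ x y + δ y z)
    (hfS : ∀ r ∈ Icc (0 : ℝ) 1, f r ∈ S) (hε : 0 < ε) {k : ℕ} {r : Fin (k + 1) → ℝ}
    (hr : Monotone r) (hr01 : ∀ i, r i ∈ Icc (0 : ℝ) 1) (h0 : r 0 = 0)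
    (h1 : r (Fin.last k) = 1) :
    ∃ L ∈ finePartitionSums δ f ε, ∑ i : Fin k, δ (f (r i.castSucc)) (f (r i.succ)) ≤ L := by
  obtain ⟨N, hN⟩ : ∃ N : ℕ, 1 / ((N : ℝ) + 1) < ε := exists_nat_one_div_lt hε
  have hM : 0 < N + 1 := N.succ_pos
  set R : ℕ → ℝ := fun n => r (Fin.clamp n k) with hR_def
  have hR : Monotone R := fun a b hab => hr (by simp [Fin.clamp, Fin.le_def]; omega)
  have hRk : ∀ i : Fin (k + 1), R i = r i := fun i => by
    simp [hR_def, Fin.clamp, Nat.min_eq_left (Nat.lt_succ_iff.1 i.2)]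
  set g := subdivide R (N + 1)
  have hg01 : ∀ t, g t ∈ Icc (0 : ℝ) 1 := fun t =>
    ⟨(hr01 _).1.trans (subdivide_mem_Icc hR hM t).1,
      (subdivide_mem_Icc hR hM t).2.trans (hr01 _).2⟩
  have hstep : ∀ t, 0 ≤ g (t + 1) - g t ∧ g (t + 1) - g t < ε := fun t => by
    obtain ⟨h₀, h₁⟩ := subdivide_add_one_sub_mem_Icc hR (fun n => hr01 _) hM t
    exact ⟨h₀, h₁.trans_lt (by exact_mod_cast hN)⟩
  refine ⟨_, ⟨k * (N + 1), fun t => g t, ?_, fun t => hg01 t, ?_, ?_, fun i => ?_, rfl⟩, ?_⟩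
  · exact (monotone_nat_of_le_succ fun t => sub_nonneg.1 (hstep t).1).comp fun a b h => h
  · exact (by simpa using subdivide_mul (R := R) hM 0 : g 0 = R 0).trans ((hRk 0).trans h0)
  · exact (mul_comm k _ ▸ subdivide_mul hM k).trans ((hRk (Fin.last k)).trans h1)
  · rw [abs_sub_comm]
    exact (abs_of_nonneg (hstep i).1).trans_lt (hstep i).2
  · calc ∑ i : Fin k, δ (f (r i.castSucc)) (f (r i.succ))
        = ∑ i ∈ range k, δ (f (R i)) (f (R (i + 1))) := by
          rw [← Fin.sum_univ_eq_sum_range (fun i => δ (f (R i)) (f (R (i + 1))))]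
          exact sum_congr rfl fun i _ => by rw [← hRk i.castSucc, ← hRk i.succ]; rfl
      _ ≤ ∑ t ∈ range (k * (N + 1)), δ (f (g t)) (f (g (t + 1))) :=
          sum_le_sum_subdivide htri (fun t => hfS _ (hg01 t)) hM k
      _ = _ := (Fin.sum_univ_eq_sum_range (fun t => δ (f (g t)) (f (g (t + 1)))) _).symm


theorem pathLength_eq_sSup_finePartitionSums
    (htri : ∀ x ∈ S, ∀ y ∈ S, ∀ z ∈ S, δ x z ≤ δ x y + δ y z)
    (hfS : ∀ r ∈ Icc (0 : ℝ) 1, f r ∈ S) (hε : 0 < ε) :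
    pathLength δ f = sSup (finePartitionSums δ f ε) := by
  apply csSup_eq_csSup_of_forall_exists_le
  · rintro L ⟨k, r, hr, hr01, h0, h1, rfl⟩
    exact exists_mem_finePartitionSums_ge htri hfS hε hr hr01 h0 h1
  · rintro L ⟨k, r, hr, hr01, h0, h1, -, rfl⟩
    exact ⟨_, ⟨k, r, hr, hr01, h0, h1, rfl⟩, le_rfl⟩

theorem finePartitionSums_congr
    (h : ∀ r ∈ Icc (0 : ℝ) 1, ∀ r' ∈ Icc (0 : ℝ) 1, |r - r'| < ε →
      δ (f r) (f r') = δ' (f r) (f r')) :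
    finePartitionSums δ f ε = finePartitionSums δ' f ε := by
  ext L
  constructor <;> rintro ⟨k, r, hr, hr01, h0, h1, hmesh, rfl⟩ <;>
    refine ⟨k, r, hr, hr01, h0, h1, hmesh, sum_congr rfl fun i _ => ?_⟩
  exacts [h _ (hr01 _) _ (hr01 _) (hmesh i), (h _ (hr01 _) _ (hr01 _) (hmesh i)).symm]

end Partition

theorem length_eq_of_locally_eq_general {E : Type*} [MetricSpace E] (S : Set E)
    (d' : E → E → ℝ)
    (htri : ∀ x ∈ S, ∀ y ∈ S, ∀ z ∈ S, d' x z ≤ d' x y + d' y z)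
    (f : ℝ → E)
    (hfS : ∀ r ∈ Set.Icc (0:ℝ) 1, f r ∈ S)
    (ε : ℝ) (hε : 0 < ε)
    (hloc : ∀ r ∈ Set.Icc (0:ℝ) 1, ∀ r' ∈ Set.Icc (0:ℝ) 1, |r - r'| < ε →
      dist (f r) (f r') = d' (f r) (f r')) :
    pathLength (fun x y => dist x y) f = pathLength d' f := by
  rw [pathLength_eq_sSup_finePartitionSums (fun x _ y _ z _ => dist_triangle x y z) hfS hε,
    pathLength_eq_sSup_finePartitionSums htri hfS hε, finePartitionSums_congr hloc]

/-- If two (pseudo-)metrics agree on pairs of points of the path at parameter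
distance less than `ε`, then the corresponding lengths of the path coincide. -/
theorem length_eq_of_locally_eq {E : Type*} [MetricSpace E] (S : Set E)
    (d' : E → E → ℝ)
    (hnonneg : ∀ x ∈ S, ∀ y ∈ S, 0 ≤ d' x y)
    (hsymm : ∀ x ∈ S, ∀ y ∈ S, d' x y = d' y x)
    (htri : ∀ x ∈ S, ∀ y ∈ S, ∀ z ∈ S, d' x z ≤ d' x y + d' y z)
    (hle : ∀ x ∈ S, ∀ y ∈ S, dist x y ≤ d' x y)
    (f : ℝ → E) (hf : ContinuousOn f (Set.Icc 0 1))
    (hfS : ∀ r ∈ Set.Icc (0:ℝ) 1, f r ∈ S)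
    (ε : ℝ) (hε : 0 < ε)
    (hloc : ∀ r ∈ Set.Icc (0:ℝ) 1, ∀ r' ∈ Set.Icc (0:ℝ) 1, |r - r'| < ε →
      dist (f r) (f r') = d' (f r) (f r')) :
    pathLength (fun x y => dist x y) f = pathLength d' f :=
  length_eq_of_locally_eq_general S d' htri f hfS ε hε hloc
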